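/- Let G = (G_i)_{i∈ℕ} be an instance of the know-all model, r ≥ 1, and 1 ≤ k ≤ |Π|, with V^in = Π. Let X = {(a, a, G_{≤r}) : a ∈ Π} be the facet of I[G_{≤r}] in which every agent's input is its own name. If γ(G_{≤r}) > k, then for □ ∈ {K, D} the relation S^□_1 ⊆ F(I[G_{≤r}]) × F(I[SA_k]) is not total at X: there is no facet X' of I[SA_k] with X S^□_1 X'. -/
import Mathlib


/-- A simplicial model: a pure chromatic simplicial complex, colored by the
agents in `Agent`, whose vertices are labeled by sets of atomic propositions.
Each atomic proposition belongs to an agent (`agentOf`), and the label of a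
vertex only contains atoms of the color of that vertex. -/
structure SimplicialModel (Agent Atom Vertex : Type) [Fintype Agent]
    [DecidableEq Vertex] where
  simplices : Set (Finset Vertex)
  chi : Vertex → Agent
  label : Vertex → Set Atom
  agentOf : Atom → Agent
  simplex_nonempty : ∀ X ∈ simplices, X.Nonempty
  down_closed : ∀ X ∈ simplices, ∀ Y : Finset Vertex, Y ⊆ X → Y.Nonempty → Y ∈ simplices
  chi_injOn : ∀ X ∈ simplices, Set.InjOn chi ↑X
  pure : ∀ X ∈ simplices, ∃ F ∈ simplices, X ⊆ F ∧ F.card = Fintype.card Agent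
  label_agent : ∀ v, ∀ p ∈ label v, agentOf p = chi v

namespace SimplicialModel

variable {Agent Atom Vertex Vertex' : Type} [Fintype Agent]
  [DecidableEq Vertex] [DecidableEq Vertex']

/-- The facets (maximal simplices) of a simplicial model: the simplices with
exactly `|Agent|` vertices. -/
def facets (M : SimplicialModel Agent Atom Vertex) : Set (Finset Vertex) :=
  {X ∈ M.simplices | X.card = Fintype.card Agent}

/-- The type of facets of a simplicial model. -/
def Facet (M : SimplicialModel Agent Atom Vertex) : Type := {X : Finset Vertex // X ∈ M.facets}

/-- The labeling of a facet: union of the labels of its vertices. -/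
def flabel (M : SimplicialModel Agent Atom Vertex) (X : M.Facet) : Set Atom :=
  ⋃ v ∈ (X.1 : Finset Vertex), M.label v

/-- `χ(X ∩ Y)`: the set of colors of the common vertices of two facets. -/
def chiInter (M : SimplicialModel Agent Atom Vertex) (X Y : M.Facet) : Set Agent :=
  M.chi '' ↑(X.1 ∩ Y.1)

/-- The indistinguishability relation `X ∼ₐ Y` : `a ∈ χ(X ∩ Y)`. -/
def indist (M : SimplicialModel Agent Atom Vertex) (a : Agent) (X Y : M.Facet) : Prop :=
  a ∈ M.chiInter X Y

/-- A morphism of simplicial models: maps simplices to simplices, preserves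
colors and preserves labels. -/
def IsMorphism (M : SimplicialModel Agent Atom Vertex) (M' : SimplicialModel Agent Atom Vertex')
    (f : Vertex → Vertex') : Prop :=
  (∀ X ∈ M.simplices, X.image f ∈ M'.simplices) ∧
  (∀ v, M'.chi (f v) = M.chi v) ∧
  (∀ v, M'.label (f v) = M.label v)

/-- Smart constructor for a simplicial model: the complex generated by a given
set of facets, each of which has `|Agent|` vertices with pairwise distinct colors. -/
def ofFacets [Nonempty Agent] (Fs : Set (Finset Vertex)) (chi : Vertex → Agent)
    (label : Vertex → Set Atom) (agentOf : Atom → Agent)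
    (hcard : ∀ F ∈ Fs, F.card = Fintype.card Agent)
    (hinj : ∀ F ∈ Fs, Set.InjOn chi ↑F)
    (hlab : ∀ v, ∀ p ∈ label v, agentOf p = chi v) :
    SimplicialModel Agent Atom Vertex where
  simplices := {X | X.Nonempty ∧ ∃ F ∈ Fs, X ⊆ F}
  chi := chi
  label := label
  agentOf := agentOf
  simplex_nonempty := fun _ hX => hX.1
  down_closed := by
    rintro X ⟨-, F, hF, hXF⟩ Y hYX hY
    exact ⟨hY, F, hF, hYX.trans hXF⟩
  chi_injOn := by
    rintro X ⟨-, F, hF, hXF⟩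
    exact (hinj F hF).mono (Finset.coe_subset.mpr hXF)
  pure := by
    rintro X ⟨-, F, hF, hXF⟩
    refine ⟨F, ⟨?_, F, hF, subset_rfl⟩, hXF, hcard F hF⟩
    rw [← Finset.card_pos, hcard F hF]
    exact Fintype.card_pos
  label_agent := hlab

end SimplicialModel

/-- The language `L_K⁺` of positive epistemic formulas:
`φ ::= p | ¬p | φ ∨ φ | φ ∧ φ | K_a φ`. -/
inductive PosFormula (Agent Atom : Type) : Type where
  | atom : Atom → PosFormula Agent Atom
  | natom : Atom → PosFormula Agent Atom
  | or : PosFormula Agent Atom → PosFormula Agent Atom → PosFormula Agent Atom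
  | and : PosFormula Agent Atom → PosFormula Agent Atom → PosFormula Agent Atom
  | know : Agent → PosFormula Agent Atom → PosFormula Agent Atom

/-- The language `L_D⁺` of positive epistemic formulas with distributed knowledge:
`φ ::= p | ¬p | φ ∨ φ | φ ∧ φ | D_A φ`. -/
inductive PosFormulaD (Agent Atom : Type) : Type where
  | atom : Atom → PosFormulaD Agent Atom
  | natom : Atom → PosFormulaD Agent Atom
  | or : PosFormulaD Agent Atom → PosFormulaD Agent Atom → PosFormulaD Agent Atom
  | and : PosFormulaD Agent Atom → PosFormulaD Agent Atom → PosFormulaD Agent Atom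
  | dknow : Set Agent → PosFormulaD Agent Atom → PosFormulaD Agent Atom

namespace SimplicialModel

variable {Agent Atom Vertex Vertex' : Type} [Fintype Agent]
  [DecidableEq Vertex] [DecidableEq Vertex']

/-- Truth of a positive formula of `L_K⁺` at a facet of a simplicial model. -/
def satK (M : SimplicialModel Agent Atom Vertex) :
    PosFormula Agent Atom → M.Facet → Prop
  | .atom p, X => p ∈ M.flabel X
  | .natom p, X => p ∉ M.flabel X
  | .or φ ψ, X => M.satK φ X ∨ M.satK ψ X
  | .and φ ψ, X => M.satK φ X ∧ M.satK ψ X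
  | .know a φ, X => ∀ Y : M.Facet, M.indist a X Y → M.satK φ Y

/-- Truth of a positive formula of `L_D⁺` at a facet of a simplicial model. -/
def satD (M : SimplicialModel Agent Atom Vertex) :
    PosFormulaD Agent Atom → M.Facet → Prop
  | .atom p, X => p ∈ M.flabel X
  | .natom p, X => p ∉ M.flabel X
  | .or φ ψ, X => M.satD φ X ∨ M.satD ψ X
  | .and φ ψ, X => M.satD φ X ∧ M.satD ψ X
  | .dknow A φ, X => ∀ Y : M.Facet, A ⊆ M.chiInter X Y → M.satD φ Y

/-- A K-simulation of `M` by `M'`: (Atom) related facets have the same labels;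
(Forth) if `X R X'` and `X ∼ₐ Y` then there is `Y'` with `Y R Y'` and `X' ∼ₐ Y'`. -/
def IsKSimulation (M : SimplicialModel Agent Atom Vertex) (M' : SimplicialModel Agent Atom Vertex')
    (R : M.Facet → M'.Facet → Prop) : Prop :=
  (∀ X X', R X X' → M.flabel X = M'.flabel X') ∧
  (∀ (a : Agent) X Y X', R X X' → M.indist a X Y →
    ∃ Y', R Y Y' ∧ M'.indist a X' Y')

/-- A D-simulation of `M` by `M'`: (Atom) related facets have the same labels;
(D-Forth) if `X R X'` then for every facet `Y` there is `Y'` with `Y R Y'` and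
`χ(X ∩ Y) ⊆ χ'(X' ∩ Y')`. -/
def IsDSimulation (M : SimplicialModel Agent Atom Vertex) (M' : SimplicialModel Agent Atom Vertex')
    (R : M.Facet → M'.Facet → Prop) : Prop :=
  (∀ X X', R X X' → M.flabel X = M'.flabel X') ∧
  (∀ X X', R X X' → ∀ Y, ∃ Y', R Y Y' ∧ M.chiInter X Y ⊆ M'.chiInter X' Y')

/-- A relation on facets is total if every facet of `M` is related to some facet of `M'`. -/
def TotalRel (M : SimplicialModel Agent Atom Vertex) (M' : SimplicialModel Agent Atom Vertex')
    (R : M.Facet → M'.Facet → Prop) : Prop :=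
  ∀ X, ∃ X', R X X'

end SimplicialModel

/-- Modal depth of a formula of `L_K⁺`. -/
def PosFormula.deg {Agent Atom : Type} : PosFormula Agent Atom → ℕ
  | .atom _ => 0
  | .natom _ => 0
  | .or φ ψ => max φ.deg ψ.deg
  | .and φ ψ => max φ.deg ψ.deg
  | .know _ φ => φ.deg + 1

/-- Modal depth of a formula of `L_D⁺`. -/
def PosFormulaD.deg {Agent Atom : Type} : PosFormulaD Agent Atom → ℕ
  | .atom _ => 0
  | .natom _ => 0
  | .or φ ψ => max φ.deg ψ.deg
  | .and φ ψ => max φ.deg ψ.deg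
  | .dknow _ φ => φ.deg + 1

namespace SimplicialModel

variable {Agent Atom Vertex Vertex' : Type} [Fintype Agent]
  [DecidableEq Vertex] [DecidableEq Vertex']

/-- The condition (Atom): related facets carry the same labels. -/
def AtomCond (M : SimplicialModel Agent Atom Vertex) (M' : SimplicialModel Agent Atom Vertex')
    (R : M.Facet → M'.Facet → Prop) : Prop :=
  ∀ X X', R X X' → M.flabel X = M'.flabel X'

/-- `n`-K-simulations, defined by induction on `n`. -/
def IsNKSimulation (M : SimplicialModel Agent Atom Vertex)
    (M' : SimplicialModel Agent Atom Vertex') :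
    ℕ → (M.Facet → M'.Facet → Prop) → Prop
  | 0, R => AtomCond M M' R
  | n + 1, R => AtomCond M M' R ∧
      ∀ (a : Agent) X Y X', R X X' → M.indist a X Y →
        ∃ (R' : M.Facet → M'.Facet → Prop) (Y' : M'.Facet),
          IsNKSimulation M M' n R' ∧ R' Y Y' ∧ M'.indist a X' Y'

/-- `n`-D-simulations, defined by induction on `n`. -/
def IsNDSimulation (M : SimplicialModel Agent Atom Vertex)
    (M' : SimplicialModel Agent Atom Vertex') :
    ℕ → (M.Facet → M'.Facet → Prop) → Prop
  | 0, R => AtomCond M M' R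
  | n + 1, R =>
      ∀ X X', R X X' → ∀ Y : M.Facet,
        ∃ (R' : M.Facet → M'.Facet → Prop) (Y' : M'.Facet),
          IsNDSimulation M M' n R' ∧ R' Y Y' ∧ M.chiInter X Y ⊆ M'.chiInter X' Y'

/-- The operator `f^K` on relations between facets. -/
def fK (M : SimplicialModel Agent Atom Vertex) (M' : SimplicialModel Agent Atom Vertex')
    (R : M.Facet → M'.Facet → Prop) : M.Facet → M'.Facet → Prop :=
  fun X X' => ∀ (a : Agent) (Y : M.Facet), M.indist a X Y →
    ∃ Y', R Y Y' ∧ M'.indist a X' Y'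

/-- The operator `f^D` on relations between facets. -/
def fD (M : SimplicialModel Agent Atom Vertex) (M' : SimplicialModel Agent Atom Vertex')
    (R : M.Facet → M'.Facet → Prop) : M.Facet → M'.Facet → Prop :=
  fun X X' => ∀ Y : M.Facet, ∃ Y', R Y Y' ∧ M.chiInter X Y ⊆ M'.chiInter X' Y'

/-- The descending sequence `S^K_n`: `S^K_0 = {(X,X') : l(X) = l'(X')}` and
`S^K_{n+1} = S^K_0 ∩ f^K(S^K_n)`. -/
def SK (M : SimplicialModel Agent Atom Vertex) (M' : SimplicialModel Agent Atom Vertex') :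
    ℕ → M.Facet → M'.Facet → Prop
  | 0 => fun X X' => M.flabel X = M'.flabel X'
  | n + 1 => fun X X' => M.flabel X = M'.flabel X' ∧ fK M M' (SK M M' n) X X'

/-- The descending sequence `S^D_n`: `S^D_0 = {(X,X') : l(X) = l'(X')}` and
`S^D_{n+1} = f^D(S^D_n)`. -/
def SD (M : SimplicialModel Agent Atom Vertex) (M' : SimplicialModel Agent Atom Vertex') :
    ℕ → M.Facet → M'.Facet → Prop
  | 0 => fun X X' => M.flabel X = M'.flabel X'
  | n + 1 => fD M M' (SD M M' n)

end SimplicialModel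

/-- An ordered partition of the set of agents: a sequence
`∅ ≠ C₁ ⊊ C₂ ⊊ ⋯ ⊊ C_l = Π`. -/
structure OrderedPartition (Agent : Type) [Fintype Agent] [DecidableEq Agent] where
  parts : List (Finset Agent)
  ne : parts ≠ []
  head_nonempty : (parts.head ne).Nonempty
  chain : parts.Chain' (· ⊂ ·)
  last_univ : parts.getLast ne = Finset.univ

namespace OrderedPartition

variable {Agent : Type} [Fintype Agent] [DecidableEq Agent]

/-- `C_{min {j : a ∈ C_j}}`: the first component of the ordered partition
containing the agent `a` (it exists since the last component is `Π`). -/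
def myPart (γ : OrderedPartition Agent) (a : Agent) : Finset Agent :=
  (γ.parts.find? (fun C => decide (a ∈ C))).getD Finset.univ

end OrderedPartition

/-- `Views r`: the possible views after communicating `r` times.
`Views 0 = V^in` and `Views (r+1)` consists of sets of pairs of an agent and a
view in `Views r`. -/
def Views (Agent Value : Type) : ℕ → Type
  | 0 => Value
  | r + 1 => Set (Agent × Views Agent Value r)

/-- `view^r_a(I, γ₁, …, γ_r)`: the view of agent `a` after `r` rounds of
immediate snapshot from the input facet `I` (given by `i : Agent → Value`),
scheduled by the ordered partitions `γ₁, …, γ_r`. -/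
def view {Agent Value : Type} [Fintype Agent] [DecidableEq Agent] (i : Agent → Value) :
    (r : ℕ) → (Fin r → OrderedPartition Agent) → Agent → Views Agent Value r
  | 0, _, a => i a
  | r + 1, γ, a =>
      {x | ∃ p ∈ (γ (Fin.last r)).myPart a,
        x = (p, view i r (fun j => γ j.castSucc) p)}

/-- The flattening map `car : Views^{r+1} → Views^1`:
`car(w) = w` for `w ∈ Views^1`, and `car(w) = ⋃_{(p,v) ∈ w} car(v)` otherwise. -/
def car {Agent Value : Type} : (r : ℕ) → Views Agent Value (r + 1) → Set (Agent × Value)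
  | 0, w => w
  | r + 1, w => {q | ∃ x ∈ (show Set (Agent × Views Agent Value (r + 1)) from w),
      q ∈ car r x.2}

attribute [local instance] Classical.decEq

noncomputable section

variable (Agent : Type) [Fintype Agent] [DecidableEq Agent] [Nonempty Agent]

/-- The facets of the product update `I[SA_k]` of the input model with the
`k`-set agreement task (with `V^in = V^out = Agent`): a vertex `(a, i, d)`
records agent `a`'s input `i` and decision `d`.  A facet is determined by an
input assignment `i` and a decision map `d` with `|d(Π)| ≤ k` whose decided
values all appear among the inputs (the precondition of the task). -/
def SAfacets (k : ℕ) : Set (Finset (Agent × Agent × Agent)) :=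
  {X | ∃ i d : Agent → Agent,
    (Finset.univ.image d).card ≤ k ∧ (∀ a : Agent, ∃ b : Agent, i b = d a) ∧
    X = Finset.univ.image (fun a => (a, i a, d a))}

/-- The product update `I[SA_k]` as a simplicial model.  Atomic propositions
are `ip_a^v ≅ (a, v) : Agent × Agent`; the label of `(a, i, d)` is `{ip_a^i}`. -/
def ISA (k : ℕ) : SimplicialModel Agent (Agent × Agent) (Agent × Agent × Agent) :=
  SimplicialModel.ofFacets (SAfacets Agent k) (fun v => v.1) (fun v => {(v.1, v.2.1)})
    Prod.fst
    (by
      rintro F ⟨i, d, -, -, rfl⟩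
      rw [Finset.card_image_of_injective _
        (fun a b h => congrArg Prod.fst h : Function.Injective fun a => (a, i a, d a))]
      exact Finset.card_univ)
    (by
      rintro F ⟨i, d, -, -, rfl⟩ x hx y hy hxy
      simp only [Finset.coe_image, Set.mem_image, Finset.mem_coe] at hx hy
      obtain ⟨a, -, rfl⟩ := hx
      obtain ⟨b, -, rfl⟩ := hy
      exact congrArg (fun c => (c, i c, d c)) hxy)
    (by
      rintro v p hp
      rw [Set.mem_singleton_iff] at hp
      subst hp
      rfl)

/-- The facets of the product update `I[IS^r]` of the input model with the
`r`-iterated immediate snapshot protocol: a vertex `(a, i, v)` records agent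
`a`'s input `i` and its view `v` after `r` rounds; a facet is determined by an
input assignment and a sequence of `r` ordered partitions. -/
def ISfacets (r : ℕ) : Set (Finset (Agent × Agent × Views Agent Agent r)) :=
  {X | ∃ (i : Agent → Agent) (γ : Fin r → OrderedPartition Agent),
    X = Finset.univ.image (fun a => (a, i a, view i r γ a))}

/-- The product update `I[IS^r]` as a simplicial model. -/
def IIS (r : ℕ) :
    SimplicialModel Agent (Agent × Agent) (Agent × Agent × Views Agent Agent r) :=
  SimplicialModel.ofFacets (ISfacets Agent r) (fun v => v.1) (fun v => {(v.1, v.2.1)})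
    Prod.fst
    (by
      rintro F ⟨i, γ, rfl⟩
      rw [Finset.card_image_of_injective _
        (fun a b h => congrArg Prod.fst h :
          Function.Injective fun a => (a, i a, view i r γ a))]
      exact Finset.card_univ)
    (by
      rintro F ⟨i, γ, rfl⟩ x hx y hy hxy
      simp only [Finset.coe_image, Set.mem_image, Finset.mem_coe] at hx hy
      obtain ⟨a, -, rfl⟩ := hx
      obtain ⟨b, -, rfl⟩ := hy
      exact congrArg (fun c => (c, i c, view i r γ c)) hxy)
    (by
      rintro v p hp
      rw [Set.mem_singleton_iff] at hp
      subst hp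
      rfl)

end

/-- A directed communication graph on the set of agents; every node has a
self-loop. `E p q` means `(p, q)` is an edge. -/
structure CommGraph (Agent : Type) where
  E : Agent → Agent → Prop
  self_loop : ∀ p, E p p

namespace CommGraph

variable {Agent : Type}

/-- The set of in-neighbors of `p`: `In(p, G) = {q : (p, q) ∈ E(G)}`. -/
def In (G : CommGraph Agent) (p : Agent) : Set Agent := {q | G.E p q}

/-- The set of out-neighbors of `p`: `Out(p, G) = {q : (q, p) ∈ E(G)}`. -/
def Out (G : CommGraph Agent) (p : Agent) : Set Agent := {q | G.E q p}

/-- Out-neighbors of a set of agents. -/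
def OutS (G : CommGraph Agent) (P : Set Agent) : Set Agent := ⋃ p ∈ P, G.Out p

/-- Composition of graphs: `(p, q) ∈ E(H ∘ G)` iff `Out(p, G) ∩ In(q, H) ≠ ∅`. -/
def comp (H G : CommGraph Agent) : CommGraph Agent where
  E := fun p q => (G.Out p ∩ H.In q).Nonempty
  self_loop := fun p => ⟨p, G.self_loop p, H.self_loop p⟩

/-- The domination number `γ(G)`: the least size of a set `P` of agents with
`Out(P, G) = Π`. -/
noncomputable def domination [Fintype Agent] (G : CommGraph Agent) : ℕ :=
  sInf {i | ∃ P : Finset Agent, P.card = i ∧ G.OutS ↑P = Set.univ}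

/-- `G_{≤r} = G_r ∘ (G_{r-1} ∘ (⋯ (G₂ ∘ G₁) ⋯))`. -/
def upTo (G : ℕ → CommGraph Agent) : ℕ → CommGraph Agent
  | 0 => G 0
  | 1 => G 1
  | r + 2 => (G (r + 2)).comp (upTo G (r + 1))

end CommGraph

noncomputable section

variable (Agent : Type) [Fintype Agent] [DecidableEq Agent] [Nonempty Agent]

/-- The facets of the product update `I[G_{≤r}]` of the input model with the
protocol associated with a know-all instance: a vertex `(a, i, v)` records the
input `i` of agent `a` and its view `v = {(p, input p) : p ∈ In(a, G_{≤r})}`. -/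
def KAfacets (G : CommGraph Agent) :
    Set (Finset (Agent × Agent × Set (Agent × Agent))) :=
  {X | ∃ input : Agent → Agent,
    X = Finset.univ.image fun a =>
      (a, input a, {x | ∃ p ∈ G.In a, x = (p, input p)})}

/-- The product update `I[G_{≤r}]` as a simplicial model (for `V^in = Π`). -/
def KAmodel (G : CommGraph Agent) :
    SimplicialModel Agent (Agent × Agent) (Agent × Agent × Set (Agent × Agent)) :=
  SimplicialModel.ofFacets (KAfacets Agent G) (fun v => v.1) (fun v => {(v.1, v.2.1)})
    Prod.fst
    (by
      rintro F ⟨input, rfl⟩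
      rw [Finset.card_image_of_injective _
        (fun a b h => congrArg Prod.fst h : Function.Injective fun a =>
          (a, input a, {x | ∃ p ∈ G.In a, x = (p, input p)}))]
      exact Finset.card_univ)
    (by
      rintro F ⟨input, rfl⟩ x hx y hy hxy
      simp only [Finset.coe_image, Set.mem_image, Finset.mem_coe] at hx hy
      obtain ⟨a, -, rfl⟩ := hx
      obtain ⟨b, -, rfl⟩ := hy
      exact congrArg
        (fun c => (c, input c, {x | ∃ p ∈ G.In c, x = (p, input p)})) hxy)
    (by
      rintro v p hp
      rw [Set.mem_singleton_iff] at hp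
      subst hp
      rfl)

end

section AuxLemmas

open SimplicialModel CommGraph

variable {Agent Atom Vertex : Type} [Fintype Agent] [DecidableEq Vertex] [Nonempty Agent]

/-- The facets of `ofFacets Fs …` are exactly the generating facets `Fs`. -/
lemma ofFacets_facets (Fs : Set (Finset Vertex)) (chi : Vertex → Agent)
    (label : Vertex → Set Atom) (agentOf : Atom → Agent)
    (hcard : ∀ F ∈ Fs, F.card = Fintype.card Agent)
    (hinj : ∀ F ∈ Fs, Set.InjOn chi ↑F)
    (hlab : ∀ v, ∀ p ∈ label v, agentOf p = chi v) :
    (SimplicialModel.ofFacets Fs chi label agentOf hcard hinj hlab).facets = Fs := by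
  ext X
  constructor
  · rintro ⟨⟨-, F, hF, hXF⟩, hc⟩
    obtain rfl := Finset.eq_of_subset_of_card_le hXF (le_of_eq ((hcard F hF).trans hc.symm))
    exact hF
  · intro hF
    refine ⟨⟨?_, X, hF, subset_rfl⟩, hcard X hF⟩
    rw [← Finset.card_pos, hcard X hF]
    exact Fintype.card_pos

end AuxLemmas

open SimplicialModel CommGraph in
/-- Key argument: no facet `X'` of `I[SA_k]` can be related to the identity-input
facet `X` of `I[G_{≤r}]` by any relation satisfying the one-step simulation
property at `X`. -/
theorem key_knowall
    {Agent : Type} [Fintype Agent] [DecidableEq Agent] [Nonempty Agent]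
    (Gr : CommGraph Agent) (k : ℕ) (hdom : k < Gr.domination)
    (X : (KAmodel Agent Gr).Facet)
    (hX : X.1 = (Finset.univ.image fun a =>
        (a, a, {x | ∃ p ∈ Gr.In a, x = (p, p)})))
    (X' : (ISA Agent k).Facet)
    (H : ∀ (b : Agent) (Y : (KAmodel Agent Gr).Facet),
        (KAmodel Agent Gr).indist b X Y →
        ∃ Y', (KAmodel Agent Gr).flabel Y = (ISA Agent k).flabel Y' ∧
          (ISA Agent k).indist b X' Y') : False := by
  classical
  have hSAfac : (ISA Agent k).facets = SAfacets Agent k := ofFacets_facets _ _ _ _ _ _ _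
  have hKAfac : (KAmodel Agent Gr).facets = KAfacets Agent Gr := ofFacets_facets _ _ _ _ _ _ _
  have hX'mem : X'.1 ∈ SAfacets Agent k := by
    rw [← hSAfac]
    exact X'.2
  obtain ⟨i, d, hdk, hpre, hX'eq⟩ := hX'mem
  -- find an agent `b` not dominated by the decided values
  have hnd : ¬ Gr.OutS ↑(Finset.univ.image d) = Set.univ := by
    intro h
    have : Gr.domination ≤ (Finset.univ.image d).card :=
      Nat.sInf_le ⟨Finset.univ.image d, rfl, h⟩
    omega
  obtain ⟨b, hb⟩ : ∃ b, b ∉ Gr.OutS ↑(Finset.univ.image d) := by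
    by_contra h
    push_neg at h
    exact hnd (Set.eq_univ_of_forall h)
  have hbd : ¬ Gr.E b (d b) := by
    intro h
    exact hb (Set.mem_biUnion (by simp : d b ∈ (↑(Finset.univ.image d) : Set Agent)) h)
  -- the facet Y with inputs j
  set j : Agent → Agent := fun p => if Gr.E b p then p else b with hj
  have hjIn : ∀ c, Gr.E b (j c) := by
    intro c
    by_cases h : Gr.E b c <;> simp [hj, h, Gr.self_loop]
  set YF : Finset (Agent × Agent × Set (Agent × Agent)) :=
    Finset.univ.image (fun a => (a, j a, {x | ∃ p ∈ Gr.In a, x = (p, j p)})) with hYF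
  have hYfac : YF ∈ (KAmodel Agent Gr).facets := by
    rw [hKAfac]
    exact ⟨j, rfl⟩
  set Y : (KAmodel Agent Gr).Facet := ⟨YF, hYfac⟩ with hY
  -- the shared b-vertex of X and Y
  have hvY : ((b, b, {x | ∃ p ∈ Gr.In b, x = (p, p)}) :
      Agent × Agent × Set (Agent × Agent)) ∈ YF := by
    rw [hYF]
    refine Finset.mem_image.2 ⟨b, Finset.mem_univ b, ?_⟩
    have h1 : j b = b := by simp [hj, Gr.self_loop b]
    have h2 : {x | ∃ p ∈ Gr.In b, x = (p, j p)} = {x | ∃ p ∈ Gr.In b, x = (p, p)} := by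
      ext x
      constructor
      · rintro ⟨p, hp, rfl⟩
        exact ⟨p, hp, by have h : Gr.E b p := hp; simp [hj, h]⟩
      · rintro ⟨p, hp, rfl⟩
        exact ⟨p, hp, by have h : Gr.E b p := hp; simp [hj, h]⟩
    rw [h1, h2]
  have hvX : ((b, b, {x | ∃ p ∈ Gr.In b, x = (p, p)}) :
      Agent × Agent × Set (Agent × Agent)) ∈ X.1 := by
    rw [hX]
    exact Finset.mem_image.2 ⟨b, Finset.mem_univ b, rfl⟩
  have hind : (KAmodel Agent Gr).indist b X Y :=
    ⟨(b, b, {x | ∃ p ∈ Gr.In b, x = (p, p)}),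
      Finset.mem_coe.2 (Finset.mem_inter.2 ⟨hvX, hvY⟩), rfl⟩
  obtain ⟨Y', hlabeq, hbY'⟩ := H b Y hind
  have hY'mem : Y'.1 ∈ SAfacets Agent k := by
    rw [← hSAfac]
    exact Y'.2
  obtain ⟨i', d', -, hpre', hY'eq⟩ := hY'mem
  -- labels determine inputs
  have hflY : ∀ c w, (c, w) ∈ (KAmodel Agent Gr).flabel Y ↔ w = j c := by
    intro c w
    constructor
    · intro h
      simp only [SimplicialModel.flabel, Set.mem_iUnion] at h
      obtain ⟨v, hv, hvm⟩ := h
      have hv' : v ∈ YF := hv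
      rw [hYF] at hv'
      obtain ⟨a, -, rfl⟩ := Finset.mem_image.1 hv'
      have h2 : (c, w) = (a, j a) := hvm
      injection h2 with h3 h4
      subst h3
      exact h4
    · rintro rfl
      simp only [SimplicialModel.flabel, Set.mem_iUnion]
      refine ⟨(c, j c, {x | ∃ p ∈ Gr.In c, x = (p, j p)}), ?_, rfl⟩
      show _ ∈ YF
      rw [hYF]
      exact Finset.mem_image.2 ⟨c, Finset.mem_univ c, rfl⟩
  have hflY' : ∀ c w, (c, w) ∈ (ISA Agent k).flabel Y' ↔ w = i' c := by
    intro c w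
    constructor
    · intro h
      simp only [SimplicialModel.flabel, Set.mem_iUnion] at h
      obtain ⟨v, hv, hvm⟩ := h
      rw [hY'eq] at hv
      obtain ⟨a, -, rfl⟩ := Finset.mem_image.1 hv
      have h2 : (c, w) = (a, i' a) := hvm
      injection h2 with h3 h4
      subst h3
      exact h4
    · rintro rfl
      simp only [SimplicialModel.flabel, Set.mem_iUnion]
      refine ⟨(c, i' c, d' c), ?_, rfl⟩
      rw [hY'eq]
      exact Finset.mem_image.2 ⟨c, Finset.mem_univ c, rfl⟩
  have hij : ∀ c, i' c = j c := fun c =>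
    (hflY c (i' c)).1 (hlabeq ▸ (hflY' c (i' c)).2 rfl)
  -- the common b-vertex of X' and Y'
  obtain ⟨v, hv, hvb⟩ := hbY'
  rw [Finset.mem_coe, Finset.mem_inter] at hv
  obtain ⟨hvX', hvY'⟩ := hv
  rw [hX'eq, Finset.mem_image] at hvX'
  obtain ⟨a, -, rfl⟩ := hvX'
  have hab : a = b := hvb
  subst hab
  rw [hY'eq, Finset.mem_image] at hvY'
  obtain ⟨c, -, hc⟩ := hvY'
  have hc1 : c = a := congrArg Prod.fst hc
  subst hc1
  have hd : d' c = d c := congrArg (fun x => x.2.2) hc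
  obtain ⟨c2, hc2⟩ := hpre' c
  apply hbd
  have : d c = j c2 := by rw [← hd, ← hc2, hij]
  rw [this]
  exact hjIn c2

open SimplicialModel CommGraph in
/-- Know-all model: let `X` be the facet of `I[G_{≤r}]` in which every agent's
input is its own name.  If `γ(G_{≤r}) > k` then, for `□ ∈ {K, D}`, the relation
`S^□₁ ⊆ F(I[G_{≤r}]) × F(I[SA_k])` is not total at `X`: no facet `X'` of
`I[SA_k]` satisfies `X S^□₁ X'`. -/
theorem S1_not_total_at_knowall_facet
    {Agent : Type} [Fintype Agent] [DecidableEq Agent] [Nonempty Agent]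
    (G : ℕ → CommGraph Agent) (r k : ℕ) (hr : 1 ≤ r)
    (hk : 1 ≤ k) (hk' : k ≤ Fintype.card Agent)
    (hdom : k < (upTo G r).domination) :
    ∀ X : (KAmodel Agent (upTo G r)).Facet,
      X.1 = (Finset.univ.image fun a =>
        (a, a, {x | ∃ p ∈ (upTo G r).In a, x = (p, p)})) →
      (¬ ∃ X' : (ISA Agent k).Facet,
        SK (KAmodel Agent (upTo G r)) (ISA Agent k) 1 X X') ∧
      (¬ ∃ X' : (ISA Agent k).Facet,
        SD (KAmodel Agent (upTo G r)) (ISA Agent k) 1 X X') := by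
  intro X hX
  constructor
  · rintro ⟨X', hl, hfK⟩
    refine key_knowall (upTo G r) k hdom X hX X' ?_
    intro b Y hind
    obtain ⟨Y', h0, hi⟩ := hfK b Y hind
    exact ⟨Y', h0, hi⟩
  · rintro ⟨X', hfD⟩
    refine key_knowall (upTo G r) k hdom X hX X' ?_
    intro b Y hind
    obtain ⟨Y', h0, hsub⟩ := hfD Y
    exact ⟨Y', h0, hsub hind⟩
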